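/- On ℝ^{(2p+2r)×p} with complex coordinates Z = X₀ + iX₁ ∈ ℂ^{p×p}, W = X₂ + iX₃ ∈ ℂ^{r×p}, define τ(φ) = 4 Σ_{k,l=1}^{p} ∂²φ/∂z_{kl}∂z̄_{kl} + 4 Σ_{k=1}^{r} Σ_{l=1}^{p} ∂²φ/∂w_{kl}∂w̄_{kl} and the corresponding symmetric bilinear operator κ. Let M̂ ∈ 𝔰𝔬(p+r, ℂ), i.e. a complex skew-symmetric (p+r)×(p+r) matrix. Then all components of the map Φ̂*(X) = (Z; W) + M̂ · (Z̄; W̄) satisfy τ = 0 and are pairwise κ-orthogonal (including with themselves). -/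
import Mathlib


open Matrix Complex

noncomputable section

/-- `ℝ^{(2p+2r)×p}` presented through its complex coordinates `(Z, W) ∈ ℂ^{p×p} × ℂ^{r×p}`. -/
abbrev CSpace (p r : ℕ) := (Fin p → Fin p → ℂ) × (Fin r → Fin p → ℂ)

def bC (n p : ℕ) (k : Fin n) (l : Fin p) : Fin n → Fin p → ℂ :=
  fun a b => if a = k ∧ b = l then 1 else 0

def eZ (p r : ℕ) (k l : Fin p) : CSpace p r := (bC p p k l, 0)
def eW (p r : ℕ) (k : Fin r) (l : Fin p) : CSpace p r := (0, bC r p k l)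

/-- Wirtinger derivative `∂f/∂c` along the (complex) coordinate direction `v`. -/
def wd (p r : ℕ) (f : CSpace p r → ℂ) (x v : CSpace p r) : ℂ :=
  (fderiv ℝ f x v - Complex.I * fderiv ℝ f x (Complex.I • v)) / 2

/-- Wirtinger derivative `∂f/∂c̄` along the (complex) coordinate direction `v`. -/
def wdbar (p r : ℕ) (f : CSpace p r → ℂ) (x v : CSpace p r) : ℂ :=
  (fderiv ℝ f x v + Complex.I * fderiv ℝ f x (Complex.I • v)) / 2

/-- `τ(φ) = 4 Σ_{k,l≤p} ∂²φ/∂z∂z̄ + 4 Σ_{k≤r,l≤p} ∂²φ/∂w∂w̄`. -/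
def tauC (p r : ℕ) (f : CSpace p r → ℂ) (x : CSpace p r) : ℂ :=
  (4 : ℂ) * ∑ k : Fin p, ∑ l : Fin p,
      wd p r (fun y => wdbar p r f y (eZ p r k l)) x (eZ p r k l)
    + 4 * ∑ k : Fin r, ∑ l : Fin p,
      wd p r (fun y => wdbar p r f y (eW p r k l)) x (eW p r k l)

/-- the corresponding symmetric bilinear operator `κ`. -/
def kapC (p r : ℕ) (f g : CSpace p r → ℂ) (x : CSpace p r) : ℂ :=
  (2 : ℂ) * ∑ k : Fin p, ∑ l : Fin p,
      (wd p r f x (eZ p r k l) * wdbar p r g x (eZ p r k l)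
        + wdbar p r f x (eZ p r k l) * wd p r g x (eZ p r k l))
    + 2 * ∑ k : Fin r, ∑ l : Fin p,
      (wd p r f x (eW p r k l) * wdbar p r g x (eW p r k l)
        + wdbar p r f x (eW p r k l) * wd p r g x (eW p r k l))

/-- `Φ̂*(X) = (Z; W) + M̂ (Z̄; W̄)`. -/
def PhiStar (p r : ℕ) (M : Matrix (Fin p ⊕ Fin r) (Fin p ⊕ Fin r) ℂ) (x : CSpace p r) :
    Matrix (Fin p ⊕ Fin r) (Fin p) ℂ :=
  Matrix.fromRows (Matrix.of x.1) (Matrix.of x.2)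
    + M * Matrix.fromRows (Matrix.of fun k l => (starRingEnd ℂ) (x.1 k l))
        (Matrix.of fun k l => (starRingEnd ℂ) (x.2 k l))


def cZ (p r : ℕ) (k l : Fin p) : CSpace p r →L[ℝ] ℂ :=
  ((ContinuousLinearMap.proj (R := ℝ) (φ := fun _ : Fin p => ℂ) l).comp
    (ContinuousLinearMap.proj (R := ℝ) (φ := fun _ : Fin p => Fin p → ℂ) k)).comp
    (ContinuousLinearMap.fst ℝ _ _)

def cW (p r : ℕ) (k : Fin r) (l : Fin p) : CSpace p r →L[ℝ] ℂ :=
  ((ContinuousLinearMap.proj (R := ℝ) (φ := fun _ : Fin p => ℂ) l).comp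
    (ContinuousLinearMap.proj (R := ℝ) (φ := fun _ : Fin r => Fin p → ℂ) k)).comp
    (ContinuousLinearMap.snd ℝ _ _)

def blkCLM (p r : ℕ) : (Fin p ⊕ Fin r) → Fin p → (CSpace p r →L[ℝ] ℂ)
  | Sum.inl k, l => cZ p r k l
  | Sum.inr k, l => cW p r k l

@[simp] lemma blk_inl (p r : ℕ) (k l : Fin p) (v : CSpace p r) :
    blkCLM p r (Sum.inl k) l v = v.1 k l := rfl
@[simp] lemma blk_inr (p r : ℕ) (k : Fin r) (l : Fin p) (v : CSpace p r) :
    blkCLM p r (Sum.inr k) l v = v.2 k l := rfl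

def Fc (p r : ℕ) (M : Matrix (Fin p ⊕ Fin r) (Fin p ⊕ Fin r) ℂ)
    (i : Fin p ⊕ Fin r) (j : Fin p) : CSpace p r →L[ℝ] ℂ :=
  blkCLM p r i j + ∑ m, M i m • (Complex.conjCLE.toContinuousLinearMap.comp (blkCLM p r m j))

lemma Fc_apply (p r : ℕ) (M : Matrix (Fin p ⊕ Fin r) (Fin p ⊕ Fin r) ℂ)
    (i : Fin p ⊕ Fin r) (j : Fin p) (v : CSpace p r) :
    Fc p r M i j v = blkCLM p r i j v + ∑ m, M i m * (starRingEnd ℂ) (blkCLM p r m j v) := by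
  simp [Fc, ContinuousLinearMap.sum_apply]


lemma PhiStar_eq (p r : ℕ) (M : Matrix (Fin p ⊕ Fin r) (Fin p ⊕ Fin r) ℂ)
    (i : Fin p ⊕ Fin r) (j : Fin p) :
    (fun y => PhiStar p r M y i j) = ⇑(Fc p r M i j) := by
  funext y
  rw [Fc_apply]
  have h1 : Matrix.fromRows (Matrix.of y.1) (Matrix.of y.2) i j = blkCLM p r i j y := by
    cases i <;> rfl
  have h2 : ∀ m, Matrix.fromRows (Matrix.of fun k l => (starRingEnd ℂ) (y.1 k l))
      (Matrix.of fun k l => (starRingEnd ℂ) (y.2 k l)) m j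
      = (starRingEnd ℂ) (blkCLM p r m j y) := by
    intro m; cases m <;> rfl
  simp [PhiStar, Matrix.add_apply, Matrix.mul_apply, h1, h2]

lemma fderivPhi (p r : ℕ) (M : Matrix (Fin p ⊕ Fin r) (Fin p ⊕ Fin r) ℂ)
    (i : Fin p ⊕ Fin r) (j : Fin p) (x : CSpace p r) :
    fderiv ℝ (fun y => PhiStar p r M y i j) x = Fc p r M i j := by
  rw [PhiStar_eq]; exact (Fc p r M i j).fderiv
lemma Fc_smul_eZ (p r : ℕ) (M : Matrix (Fin p ⊕ Fin r) (Fin p ⊕ Fin r) ℂ)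
    (i : Fin p ⊕ Fin r) (j : Fin p) (k l : Fin p) (c : ℂ) :
    Fc p r M i j (c • eZ p r k l)
      = c * (if i = Sum.inl k ∧ j = l then 1 else 0)
        + (starRingEnd ℂ) c * (if j = l then M i (Sum.inl k) else 0) := by
  rw [Fc_apply]
  have h1 : blkCLM p r i j (c • eZ p r k l)
      = c * (if i = Sum.inl k ∧ j = l then 1 else 0) := by
    cases i with
    | inl a => simp [eZ, bC, mul_ite]
    | inr a => simp [eZ]
  have h2 : ∀ m, (starRingEnd ℂ) (blkCLM p r m j (c • eZ p r k l))
      = (starRingEnd ℂ) c * (if m = Sum.inl k ∧ j = l then 1 else 0) := by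
    intro m
    cases m with
    | inl a =>
      show (starRingEnd ℂ) ((c • eZ p r k l).1 a j) = _
      simp only [Prod.smul_fst, Pi.smul_apply, smul_eq_mul, eZ, bC, Sum.inl.injEq]
      split_ifs <;> simp
    | inr a => simp [eZ]
  rw [h1]
  simp only [h2]
  congr 1
  rw [Fintype.sum_sum_type]
  simp [mul_ite, ite_and, Finset.sum_ite_eq', mul_comm, mul_assoc, mul_left_comm]

lemma Fc_smul_eW (p r : ℕ) (M : Matrix (Fin p ⊕ Fin r) (Fin p ⊕ Fin r) ℂ)
    (i : Fin p ⊕ Fin r) (j : Fin p) (k : Fin r) (l : Fin p) (c : ℂ) :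
    Fc p r M i j (c • eW p r k l)
      = c * (if i = Sum.inr k ∧ j = l then 1 else 0)
        + (starRingEnd ℂ) c * (if j = l then M i (Sum.inr k) else 0) := by
  rw [Fc_apply]
  have h1 : blkCLM p r i j (c • eW p r k l)
      = c * (if i = Sum.inr k ∧ j = l then 1 else 0) := by
    cases i with
    | inl a => simp [eW]
    | inr a => simp [eW, bC, mul_ite]
  have h2 : ∀ m, (starRingEnd ℂ) (blkCLM p r m j (c • eW p r k l))
      = (starRingEnd ℂ) c * (if m = Sum.inr k ∧ j = l then 1 else 0) := by
    intro m
    cases m with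
    | inl a => simp [eW]
    | inr a =>
      show (starRingEnd ℂ) ((c • eW p r k l).2 a j) = _
      simp only [Prod.smul_snd, Pi.smul_apply, smul_eq_mul, eW, bC, Sum.inr.injEq]
      split_ifs <;> simp
  rw [h1]
  simp only [h2]
  congr 1
  rw [Fintype.sum_sum_type]
  simp [mul_ite, ite_and, Finset.sum_ite_eq', mul_comm, mul_assoc, mul_left_comm]

lemma wd_eZ (p r : ℕ) (M : Matrix (Fin p ⊕ Fin r) (Fin p ⊕ Fin r) ℂ)
    (i : Fin p ⊕ Fin r) (j : Fin p) (x : CSpace p r) (k l : Fin p) :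
    wd p r (fun y => PhiStar p r M y i j) x (eZ p r k l)
      = (if i = Sum.inl k ∧ j = l then 1 else 0) := by
  have h1 := Fc_smul_eZ p r M i j k l 1
  have hI := Fc_smul_eZ p r M i j k l Complex.I
  rw [one_smul] at h1
  unfold wd
  rw [fderivPhi, h1, hI]
  set d1 : ℂ := (if i = Sum.inl k ∧ j = l then 1 else 0)
  set d2 : ℂ := (if j = l then M i (Sum.inl k) else 0)
  simp only [_root_.map_one, one_mul, Complex.conj_I]
  linear_combination (d2 - d1) / 2 * Complex.I_sq

lemma wdbar_eZ (p r : ℕ) (M : Matrix (Fin p ⊕ Fin r) (Fin p ⊕ Fin r) ℂ)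
    (i : Fin p ⊕ Fin r) (j : Fin p) (x : CSpace p r) (k l : Fin p) :
    wdbar p r (fun y => PhiStar p r M y i j) x (eZ p r k l)
      = (if j = l then M i (Sum.inl k) else 0) := by
  have h1 := Fc_smul_eZ p r M i j k l 1
  have hI := Fc_smul_eZ p r M i j k l Complex.I
  rw [one_smul] at h1
  unfold wdbar
  rw [fderivPhi, h1, hI]
  set d1 : ℂ := (if i = Sum.inl k ∧ j = l then 1 else 0)
  set d2 : ℂ := (if j = l then M i (Sum.inl k) else 0)
  simp only [_root_.map_one, one_mul, Complex.conj_I]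
  linear_combination (d1 - d2) / 2 * Complex.I_sq

lemma wd_eW (p r : ℕ) (M : Matrix (Fin p ⊕ Fin r) (Fin p ⊕ Fin r) ℂ)
    (i : Fin p ⊕ Fin r) (j : Fin p) (x : CSpace p r) (k : Fin r) (l : Fin p) :
    wd p r (fun y => PhiStar p r M y i j) x (eW p r k l)
      = (if i = Sum.inr k ∧ j = l then 1 else 0) := by
  have h1 := Fc_smul_eW p r M i j k l 1
  have hI := Fc_smul_eW p r M i j k l Complex.I
  rw [one_smul] at h1
  unfold wd
  rw [fderivPhi, h1, hI]
  set d1 : ℂ := (if i = Sum.inr k ∧ j = l then 1 else 0)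
  set d2 : ℂ := (if j = l then M i (Sum.inr k) else 0)
  simp only [_root_.map_one, one_mul, Complex.conj_I]
  linear_combination (d2 - d1) / 2 * Complex.I_sq

lemma wdbar_eW (p r : ℕ) (M : Matrix (Fin p ⊕ Fin r) (Fin p ⊕ Fin r) ℂ)
    (i : Fin p ⊕ Fin r) (j : Fin p) (x : CSpace p r) (k : Fin r) (l : Fin p) :
    wdbar p r (fun y => PhiStar p r M y i j) x (eW p r k l)
      = (if j = l then M i (Sum.inr k) else 0) := by
  have h1 := Fc_smul_eW p r M i j k l 1
  have hI := Fc_smul_eW p r M i j k l Complex.I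
  rw [one_smul] at h1
  unfold wdbar
  rw [fderivPhi, h1, hI]
  set d1 : ℂ := (if i = Sum.inr k ∧ j = l then 1 else 0)
  set d2 : ℂ := (if j = l then M i (Sum.inr k) else 0)
  simp only [_root_.map_one, one_mul, Complex.conj_I]
  linear_combination (d1 - d2) / 2 * Complex.I_sq

lemma wd_const (p r : ℕ) (c : ℂ) (x v : CSpace p r) :
    wd p r (fun _ => c) x v = 0 := by
  unfold wd
  simp [fderiv_const]


/-- for a complex skew-symmetric `M̂ ∈ 𝔰𝔬(p+r,ℂ)`, all components of
`Φ̂*(X) = (Z;W) + M̂(Z̄;W̄)` satisfy `τ = 0` and are pairwise (and self) `κ`-orthogonal. -/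
theorem stmt8 (p r : ℕ) (M : Matrix (Fin p ⊕ Fin r) (Fin p ⊕ Fin r) ℂ)
    (hM : Mᵀ = -M)
    (i i' : Fin p ⊕ Fin r) (j j' : Fin p) (x : CSpace p r) :
    tauC p r (fun y => PhiStar p r M y i j) x = 0 ∧
    kapC p r (fun y => PhiStar p r M y i j) (fun y => PhiStar p r M y i' j') x = 0 := by
  have hsk : ∀ a b, M a b = - M b a := by
    intro a b
    have := congrFun (congrFun hM b) a
    simpa [Matrix.transpose_apply, Matrix.neg_apply] using this
  constructor
  · unfold tauC
    have hz : ∀ k l : Fin p,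
        wd p r (fun y => wdbar p r (fun y' => PhiStar p r M y' i j) y (eZ p r k l)) x (eZ p r k l) = 0 := by
      intro k l
      have : (fun y => wdbar p r (fun y' => PhiStar p r M y' i j) y (eZ p r k l))
          = fun _ => (if j = l then M i (Sum.inl k) else 0) := by
        funext y; exact wdbar_eZ p r M i j y k l
      rw [this, wd_const]
    have hw : ∀ (k : Fin r) (l : Fin p),
        wd p r (fun y => wdbar p r (fun y' => PhiStar p r M y' i j) y (eW p r k l)) x (eW p r k l) = 0 := by
      intro k l
      have : (fun y => wdbar p r (fun y' => PhiStar p r M y' i j) y (eW p r k l))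
          = fun _ => (if j = l then M i (Sum.inr k) else 0) := by
        funext y; exact wdbar_eW p r M i j y k l
      rw [this, wd_const]
    simp [hz, hw]
  · unfold kapC
    simp only [wd_eZ, wdbar_eZ, wd_eW, wdbar_eW]
    rcases i with a | a <;> rcases i' with a' | a' <;>
      simp [ite_and, mul_ite, ite_mul, Finset.sum_add_distrib, Finset.sum_ite_eq',
        Finset.sum_ite_eq, Sum.inl.injEq, Sum.inr.injEq] <;>
      split_ifs with h <;> first | simp | (rw [hsk]; ring)

end
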